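/- arXiv:1610.06524 — 3 statements merged into one kernel-verified Lean document; each statement's English description precedes it below -/
import Mathlib

section
/- Let K be a field and let J be an ideal of the polynomial ring K[x_1, x_2, …, x_n] containing a polynomial f = g·x_1 + h, where g and h are polynomials in K[x_2, …, x_n] (not involving x_1) and g is not a zero divisor modulo J. Let J_1 = J ∩ K[x_2, …, x_n] be the elimination ideal. Then J is a prime ideal if and only if J_1 is a prime ideal. -/
/-!
Modulo `J`, multiplying by `g` turns `x₁` into `-h`, so every polynomial becomes, after
multiplication by a power of `g`, congruent to a polynomial in `x₂, …, xₙ`. As `g` is a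
non-zero-divisor modulo `J`, such powers can be cancelled, and primality of the elimination
ideal transfers to `J`.
-/

open MvPolynomial

namespace Ideal

variable {A B : Type*} [CommRing A] [CommRing B]

theorem mem_of_pow_mul_mem {J : Ideal B} {s : B}
    (hs : Quotient.mk J s ∈ nonZeroDivisors (B ⧸ J)) {m : ℕ} {b : B} (h : s ^ m * b ∈ J) :
    b ∈ J := by
  rw [← Quotient.eq_zero_iff_mem] at h ⊢
  rwa [map_mul, map_pow, mul_comm, mul_right_mem_nonZeroDivisors_eq_zero_iff (pow_mem hs m)] at h

theorem pow_add_mul_sub_map_mul_mem (f : A →+* B) {J : Ideal B} {s a c : A} {b d : B}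
    {m k : ℕ} (hb : f s ^ m * b - f a ∈ J) (hd : f s ^ k * d - f c ∈ J) :
    f s ^ (m + k) * (b * d) - f (a * c) ∈ J := by
  have key : f s ^ (m + k) * (b * d) - f (a * c)
      = f s ^ k * d * (f s ^ m * b - f a) + f a * (f s ^ k * d - f c) := by
    rw [map_mul]; ring
  rw [key]
  exact J.add_mem (J.mul_mem_left _ hb) (J.mul_mem_left _ hd)

/-- Equivalently, the `b` whose image in `(B ⧸ J)[1/f s]` comes from `A`. -/
def powMulLiftable (f : A →+* B) (J : Ideal B) (s : A) : Subring B where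
  carrier := {b | ∃ (m : ℕ) (a : A), f s ^ m * b - f a ∈ J}
  mul_mem' := by
    rintro b d ⟨m, a, hb⟩ ⟨k, c, hd⟩
    exact ⟨m + k, a * c, pow_add_mul_sub_map_mul_mem f hb hd⟩
  one_mem' := ⟨0, 1, by simp⟩
  add_mem' := by
    rintro b d ⟨m, a, hb⟩ ⟨k, c, hd⟩
    refine ⟨m + k, s ^ k * a + s ^ m * c, ?_⟩
    have key : f s ^ (m + k) * (b + d) - f (s ^ k * a + s ^ m * c)
        = f s ^ k * (f s ^ m * b - f a) + f s ^ m * (f s ^ k * d - f c) := by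
      simp only [map_add, map_mul, map_pow]; ring
    rw [key]
    exact J.add_mem (J.mul_mem_left _ hb) (J.mul_mem_left _ hd)
  zero_mem' := ⟨0, 0, by simp⟩
  neg_mem' := by
    rintro b ⟨m, a, hb⟩
    refine ⟨m, -a, ?_⟩
    convert J.neg_mem hb using 1
    rw [map_neg]; ring

theorem map_mem_powMulLiftable (f : A →+* B) (J : Ideal B) (s a : A) :
    f a ∈ powMulLiftable f J s :=
  ⟨0, a, by simp⟩

theorem isPrime_of_isPrime_comap {f : A →+* B} {J : Ideal B} {s : A}
    (hs : Quotient.mk J (f s) ∈ nonZeroDivisors (B ⧸ J))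
    (hlift : ∀ b, b ∈ powMulLiftable f J s)
    (hJ : (J.comap f).IsPrime) : J.IsPrime := by
  refine ⟨fun htop => hJ.ne_top (by rw [htop, comap_top]), fun {b d} hbd => ?_⟩
  obtain ⟨m, a, hb⟩ := hlift b
  obtain ⟨k, c, hd⟩ := hlift d
  have hac : f (a * c) ∈ J := by
    simpa using J.sub_mem (J.mul_mem_left (f s ^ (m + k)) hbd)
      (pow_add_mul_sub_map_mul_mem f hb hd)
  refine (hJ.mem_or_mem hac).imp (fun ha => ?_) (fun hc => ?_)
  · exact mem_of_pow_mul_mem hs (by simpa using J.add_mem hb ha)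
  · exact mem_of_pow_mul_mem hs (by simpa using J.add_mem hd hc)

end Ideal

theorem MvPolynomial.mem_powMulLiftable_rename_succ {R : Type*} [CommRing R] {n : ℕ}
    {J : Ideal (MvPolynomial (Fin (n + 1)) R)} {g h : MvPolynomial (Fin n) R}
    (hf : rename Fin.succ g * X 0 + rename Fin.succ h ∈ J) (p : MvPolynomial (Fin (n + 1)) R) :
    p ∈ Ideal.powMulLiftable (rename Fin.succ).toRingHom J g := by
  induction p using MvPolynomial.induction_on with
  | C a => simpa using Ideal.map_mem_powMulLiftable (rename Fin.succ).toRingHom J g (C a)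
  | add p q hp hq => exact add_mem hp hq
  | mul_X p i hp =>
    refine mul_mem hp ?_
    induction i using Fin.cases with
    | zero => exact ⟨1, -h, by simpa [sub_eq_add_neg] using hf⟩
    | succ j => simpa using Ideal.map_mem_powMulLiftable (rename Fin.succ).toRingHom J g (X j)

theorem stmt4 {K : Type} [Field K] {n : ℕ} (J : Ideal (MvPolynomial (Fin (n + 1)) K))
    (g h : MvPolynomial (Fin n) K)
    (hf : (rename (Fin.succ : Fin n → Fin (n + 1)) g) * X 0
        + rename (Fin.succ : Fin n → Fin (n + 1)) h ∈ J)
    (hreg : Ideal.Quotient.mk J (rename (Fin.succ : Fin n → Fin (n + 1)) g) ∈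
      nonZeroDivisors (MvPolynomial (Fin (n + 1)) K ⧸ J)) :
    J.IsPrime ↔
      (J.comap (rename (Fin.succ : Fin n → Fin (n + 1))).toRingHom :
        Ideal (MvPolynomial (Fin n) K)).IsPrime :=
  ⟨fun hJ => hJ.comap _, Ideal.isPrime_of_isPrime_comap (s := g) hreg
    (MvPolynomial.mem_powMulLiftable_rename_succ hf)⟩
end

section
/- Let n ≥ 3 and let T be a binary phylogenetic [n]-tree, so that T has exactly 2n − 3 edges. For each pair of leaves i < j, let α_{ij} ∈ ℝ^{E(T)} be the 0/1 vector indexed by the edges of T whose e-coordinate is 1 exactly when e lies on the path in T from leaf i to leaf j. Then the vectors {α_{ij} : 1 ≤ i < j ≤ n} span ℝ^{E(T)}; equivalently, the (n choose 2) × (2n − 3) matrix with rows α_{ij} has rank 2n − 3. -/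
open MvPolynomial

/-- Index type for the variables `p_{ij}`, `1 ≤ i < j ≤ n` (0-indexed here). -/
abbrev PairIdx (n : ℕ) := {x : Fin n × Fin n // x.1 < x.2}

/-- The polynomial ring `Z^n = ℂ[p_{ij} : 1 ≤ i < j ≤ n]`. -/
abbrev Zn (n : ℕ) := MvPolynomial (PairIdx n) ℂ

/-- The variable `p_{ij}` for `i < j`. -/
noncomputable def pvar {n : ℕ} (i j : Fin n) (h : i < j) : Zn n := X ⟨(i, j), h⟩

/-- The Plücker ideal `I_{2,n}`, generated by the quadratic Plücker relations. -/
noncomputable def pluckerIdeal (n : ℕ) : Ideal (Zn n) :=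
  Ideal.span { f | ∃ (i j k l : Fin n) (hij : i < j) (hjk : j < k) (hkl : k < l),
    f = pvar i j hij * pvar k l hkl - pvar i k (hij.trans hjk) * pvar j l (hjk.trans hkl)
      + pvar i l ((hij.trans hjk).trans hkl) * pvar j k hjk }

/-- `ω`-weight of a monomial exponent vector. -/
noncomputable def mwt {σ : Type*} (ω : σ → ℝ) (m : σ →₀ ℕ) : ℝ :=
  m.sum fun s e => (e : ℝ) * ω s

open Classical in
/-- The initial form of a polynomial: the sum of its terms of maximal `ω`-weight. -/
noncomputable def initialForm {R : Type*} [CommSemiring R] {σ : Type*} (ω : σ → ℝ)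
    (f : MvPolynomial σ R) : MvPolynomial σ R :=
  ∑ m ∈ f.support,
    if (∀ m' ∈ f.support, mwt ω m' ≤ mwt ω m) then monomial m (coeff m f) else 0

/-- The initial ideal of `I` with respect to the weight vector `ω`. -/
noncomputable def initialIdeal {R : Type*} [CommSemiring R] {σ : Type*} (ω : σ → ℝ)
    (I : Ideal (MvPolynomial σ R)) : Ideal (MvPolynomial σ R) :=
  Ideal.span { g | ∃ f ∈ I, f ≠ 0 ∧ g = initialForm ω f }

/-- The `r`-th secant ideal `I^{{r}}`: the ideal of polynomials vanishing on the (closure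
of the) set of sums of `r` points of the zero locus of `I`. -/
noncomputable def secantIdeal {σ : Type*} (I : Ideal (MvPolynomial σ ℂ)) (r : ℕ) :
    Ideal (MvPolynomial σ ℂ) :=
  MvPolynomial.vanishingIdeal ℂ
    { x | ∃ v : Fin r → (σ → ℂ), (∀ i, v i ∈ MvPolynomial.zeroLocus ℂ I) ∧ x = ∑ i, v i }

/-- A binary phylogenetic `[n]`-tree: a finite tree all of whose vertices have degree 1
or 3, with its degree-one vertices (leaves) bijectively labeled by `{1,…,n}`
(here `Fin n`). -/
structure PhyloTree (n : ℕ) where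
  V : Type
  finiteV : Finite V
  G : SimpleGraph V
  connected : G.Connected
  acyclic : G.IsAcyclic
  degree13 : ∀ v : V, Nat.card {u // G.Adj v u} = 1 ∨ Nat.card {u // G.Adj v u} = 3
  leaf : Fin n → V
  leafInj : Function.Injective leaf
  leafDeg : ∀ i, Nat.card {u // G.Adj (leaf i) u} = 1
  leafSurj : ∀ v : V, Nat.card {u // G.Adj v u} = 1 → ∃ i, leaf i = v

attribute [instance] PhyloTree.finiteV

/-- The quartet `ab|cd` holds in `T`: the path from `a` to `b` and the path from `c`
to `d` are vertex-disjoint. -/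
def PhyloTree.quartet {n : ℕ} (T : PhyloTree n) (a b c d : Fin n) : Prop :=
  ∃ (p : T.G.Walk (T.leaf a) (T.leaf b)) (q : T.G.Walk (T.leaf c) (T.leaf d)),
    p.IsPath ∧ q.IsPath ∧ ∀ v, v ∈ p.support → v ∉ q.support

/-- The labeling of `T` is circular: no quartet `ik|jl` with `i < j < k < l`. -/
def PhyloTree.circular {n : ℕ} (T : PhyloTree n) : Prop :=
  ∀ i j k l : Fin n, i < j → j < k → k < l → ¬ T.quartet i k j l

/-- `ω` is a weight vector constructed from `T`: `ω_{ij}` is the path-length distance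
between leaves `i` and `j` for some assignment of strictly positive edge lengths. -/
def IsWeightFrom {n : ℕ} (T : PhyloTree n) (ω : PairIdx n → ℝ) : Prop :=
  ∃ ℓ : Sym2 T.V → ℝ, (∀ e ∈ T.G.edgeSet, 0 < ℓ e) ∧
    ∀ (v : PairIdx n) (p : T.G.Walk (T.leaf v.1.1) (T.leaf v.1.2)),
      p.IsPath → ω v = (p.edges.map ℓ).sum

/-- The Plücker tree ideal `J_T`, generated by the binomials
`p_{ik} p_{jl} - p_{il} p_{jk}` over quartets `ij|kl` of `T` with `i < j < k < l`. -/
noncomputable def treeIdeal {n : ℕ} (T : PhyloTree n) : Ideal (Zn n) :=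
  Ideal.span { f | ∃ (i j k l : Fin n) (hij : i < j) (hjk : j < k) (hkl : k < l),
    T.quartet i j k l ∧
    f = pvar i k (hij.trans hjk) * pvar j l (hjk.trans hkl)
      - pvar i l ((hij.trans hjk).trans hkl) * pvar j k hjk }

/-- Leaves `i ≠ j` form a cherry of `T` if they are adjacent to a common vertex. -/
def PhyloTree.isCherry {n : ℕ} (T : PhyloTree n) (i j : Fin n) : Prop :=
  i ≠ j ∧ ∃ v : T.V, T.G.Adj (T.leaf i) v ∧ T.G.Adj (T.leaf j) v

/-- The number of cherries of `T`. -/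
noncomputable def numCherries {n : ℕ} (T : PhyloTree n) : ℕ :=
  Nat.card {x : Fin n × Fin n // x.1 < x.2 ∧ T.isCherry x.1 x.2}

/-!
In a tree whose `n` leaves have degree 1 and whose other vertices have degree 3, the handshake
lemma and `|E| = |V| - 1` give `|E| = 2n - 3`.

For the span, let `q` be a path from a leaf `i` to a vertex `w`. If `w` is internal, the
two branches at `w` not containing `q` lead to leaves `j` and `k`, and
`2 α(q) = α_ij + α_ik - α_jk`; so `α(q)` lies in the span of the `α_ij`. An edge `ab` is
then `α(r·ab) - α(r)` for a path `r` from a leaf to `a` that avoids `b`, and the unit vectors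
span `ℝ^E`.
-/

open SimpleGraph Walk

namespace Set

theorem exists_ne_ne_of_two_lt_ncard {α : Type*} {s : Set α} (hs : 2 < s.ncard) (y : α) :
    ∃ a ∈ s, ∃ b ∈ s, a ≠ y ∧ b ≠ y ∧ a ≠ b := by
  have hfin : s.Finite := finite_of_ncard_pos (by omega)
  have : 1 < (s \ {y}).ncard := by
    have := pred_ncard_le_ncard_sdiff_singleton s y
    omega
  obtain ⟨a, ha, b, hb, hab⟩ := (one_lt_ncard hfin.sdiff).1 this
  exact ⟨a, ha.1, b, hb.1, ha.2, hb.2, hab⟩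

end Set

namespace SimpleGraph

variable {V : Type*} {G : SimpleGraph V}

theorem IsAcyclic.eq_of_isPath (hG : G.IsAcyclic) {u v : V} {q q' : G.Walk u v}
    (hq : q.IsPath) (hq' : q'.IsPath) : q = q' :=
  congrArg Subtype.val ((hG.subsingleton_path u v).elim ⟨q, hq⟩ ⟨q', hq'⟩)

theorem IsAcyclic.isPath_append (hG : G.IsAcyclic) {u v w : V} {q : G.Walk u v}
    {r : G.Walk v w} (hq : q.IsPath) (hr : r.IsPath) (hne : q.penultimate ≠ r.snd) :
    (q.append r).IsPath := by
  induction r generalizing u with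
  | nil => simpa using hq
  | @cons v x w h r ih =>
    rw [← concat_append]
    have hx : x ∉ q.support := fun hx =>
      hne ((hG.eq_penultimate_of_adj_end hq h hx).symm.trans (snd_cons r h).symm)
    have hr' := (cons_isPath_iff h r).1 hr
    refine ih (hq.concat hx h) hr'.1 ?_
    rw [penultimate_concat]
    exact fun hv => hr'.2 (hv ▸ r.getVert_mem_support 1)

theorem IsAcyclic.exists_isPath_append_forall_adj_eq_penultimate [Finite V]
    (hG : G.IsAcyclic) {u v : V} (q : G.Walk u v) (hq : q.IsPath) :
    ∃ (w : V) (r : G.Walk v w), (q.append r).IsPath ∧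
      ∀ z, G.Adj w z → z = (q.append r).penultimate := by
  by_cases hv : ∀ z, G.Adj v z → z = q.penultimate
  · exact ⟨v, nil, by simpa using hq, by simpa using hv⟩
  obtain ⟨z, hz, hne⟩ := not_forall₂.1 hv
  have hqz : (q.concat hz).IsPath := by
    rw [concat_eq_append]
    exact hG.isPath_append hq (IsPath.of_adj hz) (Ne.symm hne)
  obtain ⟨w, r, hr, hw⟩ := hG.exists_isPath_append_forall_adj_eq_penultimate (q.concat hz) hqz
  rw [concat_append] at hr hw
  exact ⟨w, cons hz r, hr, hw⟩
termination_by Nat.card V - q.length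
decreasing_by
  have := Fintype.ofFinite V
  have hlt := hqz.length_lt
  rw [← Nat.card_eq_fintype_card] at hlt
  simp only [length_concat] at hlt ⊢
  omega

section

variable (R : Type*) [Zero R] [One R]

/-- The vector `α_{ij}` of the statement is `edgeIndicator ℝ (p i j)`. -/
noncomputable def edgeIndicator {u v : V} (q : G.Walk u v) : G.edgeSet → R :=
  Set.indicator {e : G.edgeSet | (e : Sym2 V) ∈ q.edges} (fun _ => 1)

variable {R}

@[simp]
theorem edgeIndicator_nil {u : V} : edgeIndicator R (nil : G.Walk u u) = 0 := by
  ext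
  simp [edgeIndicator]

@[simp]
theorem edgeIndicator_reverse {u v : V} (q : G.Walk u v) :
    edgeIndicator R q.reverse = edgeIndicator R q := by
  simp [edgeIndicator]

theorem edgeIndicator_toWalk [DecidableEq V] {a b : V} (h : G.Adj a b) :
    edgeIndicator R h.toWalk = Pi.single ⟨s(a, b), h⟩ 1 := by
  ext e
  simp [edgeIndicator, Set.indicator, Pi.single_apply, Subtype.ext_iff]

end

theorem edgeIndicator_append {R : Type*} [AddMonoidWithOne R] {u v w : V} {q : G.Walk u v}
    {r : G.Walk v w} (h : (q.append r).IsTrail) :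
    edgeIndicator R (q.append r) = edgeIndicator R q + edgeIndicator R r := by
  have hnd := h.edges_nodup
  rw [edges_append] at hnd
  ext e
  simp only [edgeIndicator, edges_append, List.mem_append, Pi.add_apply]
  by_cases hq : (e : Sym2 V) ∈ q.edges <;> by_cases hr : (e : Sym2 V) ∈ r.edges
  · exact absurd hr (List.disjoint_of_nodup_append hnd hq)
  all_goals simp [hq, hr]

end SimpleGraph

namespace PhyloTree

variable {n : ℕ} (T : PhyloTree n)

theorem ncard_neighborSet_leaf (i : Fin n) : (T.G.neighborSet (T.leaf i)).ncard = 1 :=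
  T.leafDeg i

theorem ncard_neighborSet_of_notMem_range {v : T.V} (hv : v ∉ Set.range T.leaf) :
    (T.G.neighborSet v).ncard = 3 :=
  (T.degree13 v).resolve_left fun h => hv (T.leafSurj v h)

theorem card_edgeSet : Nat.card T.G.edgeSet = 2 * n - 3 := by
  classical
  have := Fintype.ofFinite T.V
  have hdeg : ∀ v, T.G.degree v = if v ∈ Set.range T.leaf then 1 else 3 := fun v => by
    rw [← card_neighborSet_eq_degree, ← Nat.card_eq_fintype_card, Nat.card_coe_set_eq]
    split_ifs with hv
    · obtain ⟨i, rfl⟩ := hv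
      exact T.ncard_neighborSet_leaf i
    · exact T.ncard_neighborSet_of_notMem_range hv
  have hleaves : (Finset.univ.filter (· ∈ Set.range T.leaf)).card = n := by
    rw [show Finset.univ.filter (· ∈ Set.range T.leaf) = Finset.univ.image T.leaf by ext; simp,
      Finset.card_image_of_injective _ T.leafInj, Finset.card_fin]
  have hsplit := Finset.card_filter_add_card_filter_not (s := Finset.univ)
    (· ∈ Set.range T.leaf)
  have hsum := T.G.sum_degrees_eq_twice_card_edges
  simp only [hdeg, Finset.sum_ite, Finset.sum_const, smul_eq_mul, mul_one] at hsum
  have htree := (⟨T.connected, T.acyclic⟩ : T.G.IsTree).card_edgeFinset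
  rw [Finset.card_univ] at hsplit
  rw [Nat.card_eq_fintype_card, ← edgeFinset_card]
  omega

theorem exists_isPath_cons_to_leaf {w x : T.V} (h : T.G.Adj w x) :
    ∃ (i : Fin n) (r : T.G.Walk x (T.leaf i)), (cons h r).IsPath := by
  obtain ⟨y, r, hr, hy⟩ :=
    T.acyclic.exists_isPath_append_forall_adj_eq_penultimate h.toWalk (IsPath.of_adj h)
  have hle : (T.G.neighborSet y).ncard ≤ 1 :=
    (Set.ncard_le_one_iff (Set.toFinite _)).2 fun ha hb => (hy _ ha).trans (hy _ hb).symm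
  obtain ⟨i, rfl⟩ : y ∈ Set.range T.leaf := by
    by_contra hy'
    rw [T.ncard_neighborSet_of_notMem_range hy'] at hle
    omega
  exact ⟨i, r, by simpa using hr⟩

noncomputable def leafPathSpan (p : ∀ i j : Fin n, T.G.Walk (T.leaf i) (T.leaf j)) :
    Submodule ℝ (T.G.edgeSet → ℝ) :=
  Submodule.span ℝ {v | ∃ i j : Fin n, i < j ∧ v = edgeIndicator ℝ (p i j)}

variable {T} {p : ∀ i j : Fin n, T.G.Walk (T.leaf i) (T.leaf j)} (hp : ∀ i j, (p i j).IsPath)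
include hp

theorem edgeIndicator_mem_leafPathSpan {i j : Fin n} {q : T.G.Walk (T.leaf i) (T.leaf j)}
    (hq : q.IsPath) : edgeIndicator ℝ q ∈ T.leafPathSpan p := by
  rcases lt_trichotomy i j with h | rfl | h
  · rw [T.acyclic.eq_of_isPath hq (hp i j)]
    exact Submodule.subset_span ⟨i, j, h, rfl⟩
  · rw [eq_nil_iff_nil.2 (isPath_iff_nil.1 hq), edgeIndicator_nil]
    exact zero_mem _
  · rw [T.acyclic.eq_of_isPath hq (hp j i).reverse, edgeIndicator_reverse]
    exact Submodule.subset_span ⟨j, i, h, rfl⟩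

theorem edgeIndicator_mem_leafPathSpan_of_start_leaf {i : Fin n} {w : T.V}
    {q : T.G.Walk (T.leaf i) w} (hq : q.IsPath) : edgeIndicator ℝ q ∈ T.leafPathSpan p := by
  by_cases hw : w ∈ Set.range T.leaf
  · obtain ⟨j, rfl⟩ := hw
    exact edgeIndicator_mem_leafPathSpan hp hq
  have h3 : 2 < (T.G.neighborSet w).ncard := by
    rw [T.ncard_neighborSet_of_notMem_range hw]
    omega
  obtain ⟨x, hx : T.G.Adj w x, y, hy : T.G.Adj w y, hxq, hyq, hxy⟩ :=
    Set.exists_ne_ne_of_two_lt_ncard h3 q.penultimate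
  obtain ⟨j, r, hr⟩ := T.exists_isPath_cons_to_leaf hx
  obtain ⟨k, s, hs⟩ := T.exists_isPath_cons_to_leaf hy
  have hij : (q.append (cons hx r)).IsPath :=
    T.acyclic.isPath_append hq hr (by simpa using hxq.symm)
  have hik : (q.append (cons hy s)).IsPath :=
    T.acyclic.isPath_append hq hs (by simpa using hyq.symm)
  have hjk : ((cons hx r).reverse.append (cons hy s)).IsPath := by
    refine T.acyclic.isPath_append hr.reverse hs ?_
    rwa [penultimate_reverse, snd_cons, snd_cons]
  have key : edgeIndicator ℝ q = (2 : ℝ)⁻¹ • (edgeIndicator ℝ (q.append (cons hx r))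
      + edgeIndicator ℝ (q.append (cons hy s))
      - edgeIndicator ℝ ((cons hx r).reverse.append (cons hy s))) := by
    rw [edgeIndicator_append hij.isTrail, edgeIndicator_append hik.isTrail,
      edgeIndicator_append hjk.isTrail, edgeIndicator_reverse]
    module
  rw [key]
  exact Submodule.smul_mem _ _ (sub_mem (add_mem (edgeIndicator_mem_leafPathSpan hp hij)
    (edgeIndicator_mem_leafPathSpan hp hik)) (edgeIndicator_mem_leafPathSpan hp hjk))

theorem edgeIndicator_toWalk_mem_leafPathSpan {a b : T.V} (hab : T.G.Adj a b) :
    edgeIndicator ℝ hab.toWalk ∈ T.leafPathSpan p := by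
  obtain ⟨i, r, hr, hrb⟩ :
      ∃ (i : Fin n) (r : T.G.Walk (T.leaf i) a), r.IsPath ∧ r.penultimate ≠ b := by
    by_cases ha : a ∈ Set.range T.leaf
    · obtain ⟨i, rfl⟩ := ha
      exact ⟨i, nil, IsPath.nil, hab.ne⟩
    have h3 : 2 < (T.G.neighborSet a).ncard := by
      rw [T.ncard_neighborSet_of_notMem_range ha]
      omega
    obtain ⟨x, hx : T.G.Adj a x, -, -, hxb, -⟩ := Set.exists_ne_ne_of_two_lt_ncard h3 b
    obtain ⟨i, r, hr⟩ := T.exists_isPath_cons_to_leaf hx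
    exact ⟨i, (cons hx r).reverse, hr.reverse, by rw [penultimate_reverse, snd_cons]; exact hxb⟩
  have hrab := T.acyclic.isPath_append hr (IsPath.of_adj hab) (by simpa using hrb)
  have key : edgeIndicator ℝ hab.toWalk
      = edgeIndicator ℝ (r.append hab.toWalk) - edgeIndicator ℝ r := by
    rw [edgeIndicator_append hrab.isTrail, add_sub_cancel_left]
  rw [key]
  exact sub_mem (edgeIndicator_mem_leafPathSpan_of_start_leaf hp hrab)
    (edgeIndicator_mem_leafPathSpan_of_start_leaf hp hr)

theorem leafPathSpan_eq_top : T.leafPathSpan p = ⊤ := by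
  classical
  rw [eq_top_iff, ← (Pi.basisFun ℝ T.G.edgeSet).span_eq, Submodule.span_le]
  rintro _ ⟨⟨e, he⟩, rfl⟩
  induction e using Sym2.ind with
  | _ a b =>
    rw [Pi.basisFun_apply, ← edgeIndicator_toWalk he]
    exact edgeIndicator_toWalk_mem_leafPathSpan hp he

end PhyloTree

theorem stmt12_general {n : ℕ} (T : PhyloTree n)
    (p : ∀ i j : Fin n, T.G.Walk (T.leaf i) (T.leaf j))
    (hp : ∀ i j, (p i j).IsPath) :
    Nat.card T.G.edgeSet = 2 * n - 3 ∧
    Submodule.span ℝ { v : T.G.edgeSet → ℝ | ∃ i j : Fin n, i < j ∧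
        v = Set.indicator {e : T.G.edgeSet | (e : Sym2 T.V) ∈ (p i j).edges}
              (fun _ => (1 : ℝ)) } = ⊤ :=
  ⟨T.card_edgeSet, PhyloTree.leafPathSpan_eq_top hp⟩

theorem stmt12 {n : ℕ} (hn : 3 ≤ n) (T : PhyloTree n)
    (p : ∀ i j : Fin n, T.G.Walk (T.leaf i) (T.leaf j))
    (hp : ∀ i j, (p i j).IsPath) :
    Nat.card T.G.edgeSet = 2 * n - 3 ∧
    Submodule.span ℝ { v : T.G.edgeSet → ℝ | ∃ i j : Fin n, i < j ∧
        v = Set.indicator {e : T.G.edgeSet | (e : Sym2 T.V) ∈ (p i j).edges}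
              (fun _ => (1 : ℝ)) } = ⊤ :=
  stmt12_general T p hp
end

section
/- Let T be a binary phylogenetic [n]-tree whose labeling is circular, assign strictly positive lengths to the edges of T, and let d be the induced path-length metric on the leaves. Then for all 1 ≤ i < j < k < l ≤ n: d(i,k) + d(j,l) ≥ d(i,j) + d(k,l) and d(i,k) + d(j,l) ≥ d(i,l) + d(j,k). -/
open MvPolynomial

/-!
Since the labeling is circular, the quartet `ik|jl` does not hold, so the tree paths from `i`
to `k` and from `j` to `l` meet in some vertex `w`. Splitting both paths at `w` gives
`d(i,k) + d(j,l) = d(i,w) + d(w,k) + d(j,w) + d(w,l)`, and regrouping these four terms with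
the triangle inequality bounds both `d(i,j) + d(k,l)` and `d(i,l) + d(j,k)`.
-/

lemma List.sum_map_le_sum_map_of_subset {α M : Type*} [AddCommMonoid M] [PartialOrder M]
    [IsOrderedAddMonoid M] (f : α → M) {l₁ l₂ : List α}
    (hnd : l₁.Nodup) (hsub : l₁ ⊆ l₂) (hf : ∀ a ∈ l₂, 0 ≤ f a) :
    (l₁.map f).sum ≤ (l₂.map f).sum := by
  obtain ⟨l, hperm, hl⟩ := List.subperm_of_subset hnd hsub
  rw [← (hperm.map f).sum_eq]
  exact (hl.map f).sum_le_sum (by simpa using hf)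

namespace SimpleGraph

variable {V : Type*} {G : SimpleGraph V}

noncomputable def IsTree.weightedDist (hG : G.IsTree) (ℓ : Sym2 V → ℝ) (u v : V) : ℝ :=
  ((hG.connected.exists_isPath u v).choose.edges.map ℓ).sum

namespace IsTree

variable (hG : G.IsTree) (ℓ : Sym2 V → ℝ)

theorem weightedDist_eq {u v : V} (p : G.Walk u v) (hp : p.IsPath) :
    hG.weightedDist ℓ u v = (p.edges.map ℓ).sum := by
  have hq := (hG.connected.exists_isPath u v).choose_spec
  have : (hG.connected.exists_isPath u v).choose = p :=
    congrArg Subtype.val ((hG.isAcyclic.subsingleton_path u v).elim ⟨_, hq⟩ ⟨p, hp⟩)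
  rw [weightedDist, this]

theorem weightedDist_comm (u v : V) : hG.weightedDist ℓ u v = hG.weightedDist ℓ v u := by
  obtain ⟨p, hp⟩ := hG.connected.exists_isPath u v
  rw [hG.weightedDist_eq ℓ p hp, hG.weightedDist_eq ℓ p.reverse hp.reverse,
    Walk.edges_reverse, List.map_reverse, List.sum_reverse]

variable {ℓ} in
theorem weightedDist_le_walk (hℓ : ∀ e ∈ G.edgeSet, 0 ≤ ℓ e) {u v : V} (p : G.Walk u v) :
    hG.weightedDist ℓ u v ≤ (p.edges.map ℓ).sum := by
  classical
  rw [hG.weightedDist_eq ℓ p.bypass p.bypass_isPath]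
  exact List.sum_map_le_sum_map_of_subset ℓ p.bypass_isPath.isTrail.edges_nodup
    p.edges_bypass_subset_edges fun e he => hℓ e (p.edges_subset_edgeSet he)

variable {ℓ} in
theorem weightedDist_triangle (hℓ : ∀ e ∈ G.edgeSet, 0 ≤ ℓ e) (u w v : V) :
    hG.weightedDist ℓ u v ≤ hG.weightedDist ℓ u w + hG.weightedDist ℓ w v := by
  obtain ⟨p, hp⟩ := hG.connected.exists_isPath u w
  obtain ⟨q, hq⟩ := hG.connected.exists_isPath w v
  have := hG.weightedDist_le_walk hℓ (p.append q)
  rwa [Walk.edges_append, List.map_append, List.sum_append, ← hG.weightedDist_eq ℓ p hp,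
    ← hG.weightedDist_eq ℓ q hq] at this

theorem weightedDist_eq_add_of_mem_support [DecidableEq V] {u v w : V} (p : G.Walk u v)
    (hp : p.IsPath) (hw : w ∈ p.support) :
    hG.weightedDist ℓ u v = hG.weightedDist ℓ u w + hG.weightedDist ℓ w v := by
  rw [hG.weightedDist_eq ℓ p hp, hG.weightedDist_eq ℓ _ (hp.takeUntil hw),
    hG.weightedDist_eq ℓ _ (hp.dropUntil hw), ← List.sum_append, ← List.map_append,
    ← Walk.edges_append, p.take_spec hw]

variable {ℓ} in
theorem weightedDist_four_point_of_paths_meet (hℓ : ∀ e ∈ G.edgeSet, 0 ≤ ℓ e)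
    {a b c d w : V} (p : G.Walk a c) (hp : p.IsPath) (q : G.Walk b d) (hq : q.IsPath)
    (hwp : w ∈ p.support) (hwq : w ∈ q.support) :
    hG.weightedDist ℓ a b + hG.weightedDist ℓ c d
        ≤ hG.weightedDist ℓ a c + hG.weightedDist ℓ b d ∧
      hG.weightedDist ℓ a d + hG.weightedDist ℓ b c
        ≤ hG.weightedDist ℓ a c + hG.weightedDist ℓ b d := by
  classical
  have hac := hG.weightedDist_eq_add_of_mem_support ℓ p hp hwp
  have hbd := hG.weightedDist_eq_add_of_mem_support ℓ q hq hwq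
  have hab := hG.weightedDist_triangle hℓ a w b
  have hcd := hG.weightedDist_triangle hℓ c w d
  have had := hG.weightedDist_triangle hℓ a w d
  have hbc := hG.weightedDist_triangle hℓ b w c
  have hwb := hG.weightedDist_comm ℓ w b
  have hcw := hG.weightedDist_comm ℓ c w
  constructor <;> linarith

end IsTree

end SimpleGraph

theorem PhyloTree.isTree {n : ℕ} (T : PhyloTree n) : T.G.IsTree := ⟨T.connected, T.acyclic⟩

theorem PhyloTree.exists_mem_support_of_not_quartet {n : ℕ} {T : PhyloTree n} {a b c d : Fin n}
    (h : ¬ T.quartet a b c d) (p : T.G.Walk (T.leaf a) (T.leaf b)) (hp : p.IsPath)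
    (q : T.G.Walk (T.leaf c) (T.leaf d)) (hq : q.IsPath) :
    ∃ w ∈ p.support, w ∈ q.support := by
  by_contra! hdisj
  exact h ⟨p, q, hp, hq, hdisj⟩

theorem stmt14 {n : ℕ} (T : PhyloTree n) (hcirc : T.circular) (ℓ : Sym2 T.V → ℝ)
    (hpos : ∀ e ∈ T.G.edgeSet, 0 < ℓ e) (d : Fin n → Fin n → ℝ)
    (hd : ∀ i j : Fin n, ∀ p : T.G.Walk (T.leaf i) (T.leaf j), p.IsPath →
      d i j = (p.edges.map ℓ).sum)
    (i j k l : Fin n) (hij : i < j) (hjk : j < k) (hkl : k < l) :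
    d i j + d k l ≤ d i k + d j l ∧ d i l + d j k ≤ d i k + d j l := by
  have hdist : ∀ a b, d a b = T.isTree.weightedDist ℓ (T.leaf a) (T.leaf b) := fun a b => by
    obtain ⟨p, hp⟩ := T.connected.exists_isPath (T.leaf a) (T.leaf b)
    rw [hd a b p hp, T.isTree.weightedDist_eq ℓ p hp]
  obtain ⟨p, hp⟩ := T.connected.exists_isPath (T.leaf i) (T.leaf k)
  obtain ⟨q, hq⟩ := T.connected.exists_isPath (T.leaf j) (T.leaf l)
  obtain ⟨w, hwp, hwq⟩ :=
    PhyloTree.exists_mem_support_of_not_quartet (hcirc i j k l hij hjk hkl) p hp q hq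
  simp only [hdist]
  exact T.isTree.weightedDist_four_point_of_paths_meet (fun e he => (hpos e he).le)
    p hp q hq hwp hwq
end
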